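/- Let r > 2/3 and u ∈ (6/5, 4/3) with K(u;r) = 0, and set q = (2 − u)/(2(u − 1)). Then 1 < q < 2, g(q,u) = 0, f(q,u;r) = 0, r + u − 2 > 0, and q = 1 + √((r + u − 2)/(r + 1/10)). In particular (q, 0, u) is an equilibrium of the traveling-wave system lying on the right branch of the parabola {(q,0,u) : u = 2 − r + (r + 1/10)(q − 1)^2}. -/

import Mathlib

/-!
With `q = (2 - u)/(2(u - 1))` one has `g(q,u) = 0` identically and `q - 1 = (4 - 3u)/(2(u - 1))`.
Clearing the denominator `4(u - 1)²` in the parabola equation `u = 2 - r + (r + 1/10)(q - 1)²`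
gives exactly `K(u;r)/10 = 0`, since `K(u;r) = 40(u - 1)²(r + u - 2) - (10r + 1)(4 - 3u)²`.
So `(q, u)` lies on the parabola, which forces `f(q,u;r) = 0` and `r + u - 2 > 0`; for
`u ∈ (6/5, 4/3)` the quotient `q` lies in `(1, 2)`, which selects the right branch.
-/

noncomputable section

/-- Reaction term `f(q,u;r)` of the pipe-flow model. -/
def fq (q u r : ℝ) : ℝ := q * (r + u - 2 - (r + 1/10) * (q - 1)^2)

/-- Reaction term `g(q,u)` of the pipe-flow model. -/
def gq (q u : ℝ) : ℝ := 2 - u + 2*q*(1 - u)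

/-- The cubic `K(u;r)`. -/
def Kc (u r : ℝ) : ℝ := 40*u^3 - (50*r + 169)*u^2 + (160*r + 224)*u - 120*r - 96

lemma Kc_eq (u r : ℝ) :
    Kc u r = 40 * (u - 1) ^ 2 * (r + u - 2) - (10 * r + 1) * (4 - 3 * u) ^ 2 := by
  unfold Kc; ring

lemma gq_div_eq_zero {u : ℝ} (hu : u ≠ 1) : gq ((2 - u) / (2 * (u - 1))) u = 0 := by
  have : u - 1 ≠ 0 := sub_ne_zero.mpr hu
  unfold gq; field_simp; ring

lemma div_sub_one_eq {u : ℝ} (hu : u ≠ 1) :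
    (2 - u) / (2 * (u - 1)) - 1 = (4 - 3 * u) / (2 * (u - 1)) := by
  have : u - 1 ≠ 0 := sub_ne_zero.mpr hu
  field_simp; ring

lemma eq_parabola_of_Kc_eq_zero {u r : ℝ} (hu : u ≠ 1) (hK : Kc u r = 0) :
    u = 2 - r + (r + 1/10) * ((2 - u) / (2 * (u - 1)) - 1) ^ 2 := by
  have : u - 1 ≠ 0 := sub_ne_zero.mpr hu
  rw [Kc_eq] at hK
  rw [div_sub_one_eq hu]
  field_simp
  linear_combination hK

lemma fq_eq_zero_of_eq_parabola {q u r : ℝ} (h : u = 2 - r + (r + 1/10) * (q - 1) ^ 2) :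
    fq q u r = 0 := by
  unfold fq; rw [h]; ring

lemma eq_one_add_sqrt_of_eq_parabola {q u r : ℝ} (hr : 0 < r + 1/10) (hq : 1 ≤ q)
    (h : u = 2 - r + (r + 1/10) * (q - 1) ^ 2) :
    q = 1 + Real.sqrt ((r + u - 2) / (r + 1/10)) := by
  have : (r + u - 2) / (r + 1/10) = (q - 1) ^ 2 := by
    rw [div_eq_iff hr.ne', h]; ring
  rw [this, Real.sqrt_sq (sub_nonneg.mpr hq)]
  ring

theorem stmt1 (r u : ℝ) (hr : 2/3 < r) (hu : u ∈ Set.Ioo (6/5 : ℝ) (4/3))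
    (hK : Kc u r = 0) :
    let q := (2 - u) / (2 * (u - 1))
    1 < q ∧ q < 2 ∧ gq q u = 0 ∧ fq q u r = 0 ∧ 0 < r + u - 2 ∧
    q = 1 + Real.sqrt ((r + u - 2) / (r + 1/10)) ∧
    u = 2 - r + (r + 1/10) * (q - 1)^2 := by
  obtain ⟨hu₁, hu₂⟩ := hu
  intro q
  have hd : 0 < 2 * (u - 1) := by linarith
  have hu₀ : u ≠ 1 := by linarith
  have hq₁ : 1 < q := by rw [lt_div_iff₀ hd]; linarith
  have hq₂ : q < 2 := by rw [div_lt_iff₀ hd]; linarith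
  have hpar : u = 2 - r + (r + 1/10) * (q - 1) ^ 2 := eq_parabola_of_Kc_eq_zero hu₀ hK
  have hrpos : 0 < r + 1/10 := by linarith
  have hpos : 0 < r + u - 2 := by
    have : 0 < (r + 1/10) * (q - 1) ^ 2 := by
      have : 0 < q - 1 := by linarith
      positivity
    linarith
  exact ⟨hq₁, hq₂, gq_div_eq_zero hu₀, fq_eq_zero_of_eq_parabola hpar, hpos,
    eq_one_add_sqrt_of_eq_parabola hrpos hq₁.le hpar, hpar⟩
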